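/- arXiv:2504.02919 — 3 statements merged into one kernel-verified Lean document; each statement's English description precedes it below -/
import Mathlib

section
/- Let (X₁,Y₁), …, (X_{n+1}, Y_{n+1}) be exchangeable random pairs, and let E_i = s(X_i, Y_i) be conformity scores computed by a fixed function s. Define q̂ as the ⌈(1−α)(n+1)⌉-th smallest value among E₁, …, E_n (taken as +∞ if ⌈(1−α)(n+1)⌉ > n). Then the prediction set C(X_{n+1}) = { y : s(X_{n+1}, y) ≤ q̂ } satisfies P(Y_{n+1} ∈ C(X_{n+1})) ≥ 1 − α. -/
open MeasureTheory Set
open scoped ENNReal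
set_option maxHeartbeats 1000000

/-- The k-th smallest value of a tuple of reals (as an extended real),
taken to be +∞ if k exceeds the length (or k = 0). -/
noncomputable def kthSmallest {n : ℕ} (v : Fin n → ℝ) (k : ℕ) : EReal :=
  if h : 0 < k ∧ k ≤ n then ((v (Tuple.sort v ⟨k - 1, by omega⟩)) : EReal) else ⊤

/-- The number of indices strictly below the `p`-th order statistic is at most `p`. -/
lemma rank_sort_le {m : ℕ} (v : Fin m → ℝ) (p : Fin m) :
    (Finset.univ.filter fun i => v i < v (Tuple.sort v p)).card ≤ p := by
  classical
  have hmono := Tuple.monotone_sort v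
  have hsub : (Finset.univ.filter fun i => v i < v (Tuple.sort v p)) ⊆
      (Finset.univ.filter fun q : Fin m => q < p).image (Tuple.sort v) := by
    intro i hi
    simp only [Finset.mem_filter, Finset.mem_univ, true_and, Finset.mem_image] at hi ⊢
    refine ⟨(Tuple.sort v).symm i, ?_, by simp⟩
    by_contra hq
    push_neg at hq
    have h2 : v (Tuple.sort v p) ≤ v (Tuple.sort v ((Tuple.sort v).symm i)) := hmono hq
    simp only [Equiv.apply_symm_apply] at h2
    exact absurd hi (not_lt.2 h2)
  calc (Finset.univ.filter fun i => v i < v (Tuple.sort v p)).card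
      ≤ ((Finset.univ.filter fun q : Fin m => q < p).image (Tuple.sort v)).card :=
        Finset.card_le_card hsub
    _ ≤ (Finset.univ.filter fun q : Fin m => q < p).card := Finset.card_image_le
    _ = p := by
        have : (Finset.univ.filter fun q : Fin m => q < p) = Finset.Iio p := by
          ext q; simp
        rw [this, Fin.card_Iio]

lemma card_filter_lt_val {m k : ℕ} (hk : k ≤ m) :
    (Finset.univ.filter fun p : Fin m => (p : ℕ) < k).card = k := by
  classical
  have : (Finset.univ.filter fun p : Fin m => (p : ℕ) < k)
      = (Finset.univ : Finset (Fin k)).image (Fin.castLE hk) := by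
    ext q
    simp only [Finset.mem_filter, Finset.mem_univ, true_and, Finset.mem_image]
    constructor
    · intro hq; exact ⟨⟨q, hq⟩, rfl⟩
    · rintro ⟨i, -, rfl⟩; exact i.2
  rw [this, Finset.card_image_of_injective _ (Fin.castLE_injective hk)]
  simp

/-- At least `k` indices have rank below `k`. -/
lemma count_low_rank {m k : ℕ} (v : Fin m → ℝ) (hk : k ≤ m) :
    k ≤ (Finset.univ.filter fun j =>
      (Finset.univ.filter fun i => v i < v j).card < k).card := by
  classical
  refine le_trans (le_of_eq (card_filter_lt_val (m := m) hk).symm)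
    (Finset.card_le_card_of_injOn (fun p => Tuple.sort v p) ?_ ?_)
  · intro p hp
    simp only [Finset.coe_filter, Finset.mem_coe, Set.mem_setOf_eq, Finset.mem_filter, Finset.mem_univ, true_and] at hp ⊢
    exact lt_of_le_of_lt (rank_sort_le v p) hp
  · intro a _ b _ hab
    exact (Tuple.sort v).injective hab

/-- Quantile comparison in terms of rank counting. -/
lemma le_sort_iff {m k : ℕ} (v : Fin m → ℝ) (hk0 : 0 < k) (hk : k ≤ m) (t : ℝ) :
    t ≤ v (Tuple.sort v ⟨k - 1, by omega⟩) ↔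
      (Finset.univ.filter fun i => v i < t).card < k := by
  classical
  constructor
  · intro h
    have hsub : (Finset.univ.filter fun i => v i < t) ⊆
        (Finset.univ.filter fun i => v i < v (Tuple.sort v ⟨k - 1, by omega⟩)) := by
      intro i hi
      simp only [Finset.mem_filter, Finset.mem_univ, true_and] at hi ⊢
      exact lt_of_lt_of_le hi h
    have := (Finset.card_le_card hsub).trans (rank_sort_le v ⟨k - 1, by omega⟩)
    simp only at this
    omega
  · intro h
    by_contra hc
    push_neg at hc
    have hsub : (Finset.univ.filter fun p : Fin m => (p : ℕ) < k).image (Tuple.sort v) ⊆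
        Finset.univ.filter fun i => v i < t := by
      intro i hi
      simp only [Finset.mem_image, Finset.mem_filter, Finset.mem_univ, true_and] at hi ⊢
      obtain ⟨p, hp, rfl⟩ := hi
      have hle : p ≤ (⟨k - 1, by omega⟩ : Fin m) := by
        simp only [Fin.le_def]; omega
      exact lt_of_le_of_lt (Tuple.monotone_sort v hle) hc
    have := Finset.card_le_card hsub
    rw [Finset.card_image_of_injective _ (Tuple.sort v).injective,
      card_filter_lt_val hk] at this
    omega

lemma measurable_count {Ω : Type*} [MeasurableSpace Ω] {m : ℕ} (f : Fin m → Ω → ℝ) (g : Ω → ℝ)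
    (hf : ∀ i, Measurable (f i)) (hg : Measurable g) :
    Measurable fun ω => (Finset.univ.filter fun i => f i ω < g ω).card := by
  classical
  have : (fun ω => (Finset.univ.filter fun i => f i ω < g ω).card)
      = fun ω => ∑ i : Fin m, if f i ω < g ω then 1 else 0 := by
    funext ω; rw [Finset.card_filter]
  rw [this]
  exact Finset.measurable_sum _ fun i _ =>
    Measurable.ite (measurableSet_lt (hf i) hg) measurable_const measurable_const

lemma card_filter_perm {m : ℕ} (π : Equiv.Perm (Fin m)) (p : Fin m → Prop) [DecidablePred p] :
    (Finset.univ.filter fun i => p (π i)).card = (Finset.univ.filter p).card := by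
  classical
  apply Finset.card_bij (fun i _ => π i)
  · intro a ha
    simp only [Finset.mem_filter, Finset.mem_univ, true_and] at ha ⊢
    exact ha
  · intro a _ b _ h; exact π.injective h
  · intro b hb
    simp only [Finset.mem_filter, Finset.mem_univ, true_and] at hb
    exact ⟨π.symm b, by simp [Finset.mem_filter, hb], by simp⟩

lemma card_filter_castSucc {m : ℕ} (p : Fin (m + 1) → Prop) [DecidablePred p]
    (hlast : ¬ p (Fin.last m)) :
    (Finset.univ.filter fun i : Fin (m + 1) => p i).card
      = (Finset.univ.filter fun i : Fin m => p i.castSucc).card := by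
  classical
  apply Finset.card_bij (fun (i : Fin (m + 1)) (hi : i ∈ _) =>
    i.castPred (by
      rintro rfl
      simp only [Finset.mem_filter, Finset.mem_univ, true_and] at hi
      exact hlast hi))
  · intro a ha
    simp only [Finset.mem_filter, Finset.mem_univ, true_and] at ha ⊢
    simpa using ha
  · intro a ha b hb h
    have := congrArg Fin.castSucc h
    simpa using this
  · intro b hb
    simp only [Finset.mem_filter, Finset.mem_univ, true_and] at hb
    refine ⟨b.castSucc, by simpa using hb, by simp⟩

/-- Split conformal prediction coverage: if (X₁,Y₁),…,(X_{n+1},Y_{n+1}) are exchangeable,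
E_i = s(X_i, Y_i), and q̂ is the ⌈(1−α)(n+1)⌉-th smallest of E₁,…,E_n (+∞ if the index
exceeds n), then P(Y_{n+1} ∈ C(X_{n+1})) ≥ 1 − α where C(x) = {y : s(x,y) ≤ q̂}. -/
theorem split_conformal_coverage
    {Ω 𝒳 𝒴 : Type*} [MeasurableSpace Ω] [MeasurableSpace 𝒳] [MeasurableSpace 𝒴]
    (P : Measure Ω) [IsProbabilityMeasure P]
    (n : ℕ) (X : Fin (n + 1) → Ω → 𝒳) (Y : Fin (n + 1) → Ω → 𝒴)
    (hX : ∀ i, Measurable (X i)) (hY : ∀ i, Measurable (Y i))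
    (s : 𝒳 → 𝒴 → ℝ) (hs : Measurable (Function.uncurry s))
    (α : ℝ) (hα : α ∈ Ioo (0 : ℝ) 1)
    (hexch : ∀ π : Equiv.Perm (Fin (n + 1)),
      P.map (fun ω i => (X (π i) ω, Y (π i) ω)) = P.map (fun ω i => (X i ω, Y i ω))) :
    ENNReal.ofReal (1 - α) ≤
      P {ω | Y (Fin.last n) ω ∈
        {y : 𝒴 | (s (X (Fin.last n) ω) y : EReal) ≤
          kthSmallest (fun i : Fin n => s (X i.castSucc ω) (Y i.castSucc ω))
            ⌈(1 - α) * (n + 1 : ℝ)⌉₊}} := by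
  classical
  obtain ⟨hα0, hα1⟩ := hα
  have h1α : (0 : ℝ) < 1 - α := by linarith
  set k := ⌈(1 - α) * (n + 1 : ℝ)⌉₊ with hkdef
  have hk0 : 0 < k := Nat.ceil_pos.2 (by positivity)
  set E : Fin (n + 1) → Ω → ℝ := fun i ω => s (X i ω) (Y i ω) with hEdef
  have hEm : ∀ i, Measurable (E i) := fun i => hs.comp ((hX i).prodMk (hY i))
  by_cases hkn : k ≤ n
  · -- main case
    set B : Fin (n + 1) → Set Ω := fun j =>
      {ω | (Finset.univ.filter fun i => E i ω < E j ω).card < k} with hBdef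
    have hBm : ∀ j, MeasurableSet (B j) := by
      intro j
      have h1 : Measurable fun ω => (Finset.univ.filter fun i => E i ω < E j ω).card :=
        measurable_count E (E j) hEm (hEm j)
      have h2 : MeasurableSet (Set.Iio k : Set ℕ) := .of_discrete
      exact h1 h2
    have hZm : Measurable fun ω (i : Fin (n + 1)) => (X i ω, Y i ω) :=
      measurable_pi_lambda _ fun i => (hX i).prodMk (hY i)
    set T : Set (Fin (n + 1) → 𝒳 × 𝒴) :=
      {v | (Finset.univ.filter fun i =>
        Function.uncurry s (v i) < Function.uncurry s (v (Fin.last n))).card < k} with hTdef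
    have hTm : MeasurableSet T := by
      have h1 : Measurable fun v : Fin (n + 1) → 𝒳 × 𝒴 =>
          (Finset.univ.filter fun i => Function.uncurry s (v i)
            < Function.uncurry s (v (Fin.last n))).card :=
        measurable_count (fun i (v : Fin (n + 1) → 𝒳 × 𝒴) => Function.uncurry s (v i))
          (fun (v : Fin (n + 1) → 𝒳 × 𝒴) => Function.uncurry s (v (Fin.last n)))
          (fun i => show Measurable fun v : Fin (n + 1) → 𝒳 × 𝒴 => Function.uncurry s (v i) from
            hs.comp (measurable_pi_apply i))
          (show Measurable fun v : Fin (n + 1) → 𝒳 × 𝒴 =>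
            Function.uncurry s (v (Fin.last n)) from hs.comp (measurable_pi_apply _))
      have h2 : MeasurableSet (Set.Iio k : Set ℕ) := .of_discrete
      exact h1 h2
    have hBeq : ∀ j, P (B j) = P (B (Fin.last n)) := by
      intro j
      have hπ := hexch (Equiv.swap j (Fin.last n))
      have hZπ : Measurable fun ω (i : Fin (n + 1)) =>
          (X (Equiv.swap j (Fin.last n) i) ω, Y (Equiv.swap j (Fin.last n) i) ω) :=
        measurable_pi_lambda _ fun i => (hX _).prodMk (hY _)
      have h1 : (fun ω (i : Fin (n + 1)) =>
          (X (Equiv.swap j (Fin.last n) i) ω, Y (Equiv.swap j (Fin.last n) i) ω)) ⁻¹' T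
          = B j := by
        ext ω
        simp only [hTdef, hBdef, Set.mem_preimage, Set.mem_setOf_eq, Function.uncurry,
          Equiv.swap_apply_right]
        rw [card_filter_perm (Equiv.swap j (Fin.last n)) (fun i => E i ω < E j ω)]
      have h2 : (fun ω (i : Fin (n + 1)) => (X i ω, Y i ω)) ⁻¹' T = B (Fin.last n) := by
        ext ω
        simp only [hTdef, hBdef, Set.mem_preimage, Set.mem_setOf_eq, Function.uncurry]
        exact Iff.rfl
      calc P (B j)
          = P.map (fun ω i => (X (Equiv.swap j (Fin.last n) i) ω,
              Y (Equiv.swap j (Fin.last n) i) ω)) T := by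
            rw [Measure.map_apply hZπ hTm, h1]
        _ = P.map (fun ω i => (X i ω, Y i ω)) T := by rw [hπ]
        _ = P (B (Fin.last n)) := by rw [Measure.map_apply hZm hTm, h2]
    have hpt : ∀ ω, (k : ℝ≥0∞) ≤ ∑ j : Fin (n + 1),
        (B j).indicator (fun _ => (1 : ℝ≥0∞)) ω := by
      intro ω
      have hcomb := count_low_rank (fun i => E i ω) (by omega : k ≤ n + 1)
      calc (k : ℝ≥0∞)
          ≤ ((Finset.univ.filter fun j : Fin (n + 1) =>
              (Finset.univ.filter fun i => E i ω < E j ω).card < k).card : ℝ≥0∞) := by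
            exact_mod_cast hcomb
        _ = ∑ j : Fin (n + 1), (B j).indicator (fun _ => (1 : ℝ≥0∞)) ω := by
            rw [Finset.card_filter]
            push_cast
            refine Finset.sum_congr rfl fun j _ => ?_
            by_cases h : (Finset.univ.filter fun i => E i ω < E j ω).card < k <;>
              simp [Set.indicator, hBdef, h]
    have hsum : (k : ℝ≥0∞) ≤ ((n + 1 : ℕ) : ℝ≥0∞) * P (B (Fin.last n)) := by
      have h1 : (k : ℝ≥0∞) ≤ ∑ j : Fin (n + 1), P (B j) := by
        calc (k : ℝ≥0∞) = ∫⁻ _, (k : ℝ≥0∞) ∂P := by simp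
          _ ≤ ∫⁻ ω, ∑ j : Fin (n + 1), (B j).indicator (fun _ => (1 : ℝ≥0∞)) ω ∂P :=
              lintegral_mono hpt
          _ = ∑ j : Fin (n + 1), ∫⁻ ω, (B j).indicator (fun _ => (1 : ℝ≥0∞)) ω ∂P :=
              lintegral_finset_sum _ fun j _ => measurable_const.indicator (hBm j)
          _ = ∑ j : Fin (n + 1), P (B j) := by
              refine Finset.sum_congr rfl fun j _ => ?_
              rw [lintegral_indicator (hBm j)]
              simp
      rw [Finset.sum_congr rfl (fun j _ => hBeq j), Finset.sum_const, Finset.card_univ,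
        Fintype.card_fin, nsmul_eq_mul] at h1
      exact_mod_cast h1
    have hmul : ENNReal.ofReal (1 - α) * ((n + 1 : ℕ) : ℝ≥0∞)
        ≤ ((n + 1 : ℕ) : ℝ≥0∞) * P (B (Fin.last n)) := by
      refine le_trans ?_ hsum
      have h1 : ((1 - α) * (n + 1 : ℝ)) ≤ (k : ℝ) := Nat.le_ceil _
      calc ENNReal.ofReal (1 - α) * ((n + 1 : ℕ) : ℝ≥0∞)
          = ENNReal.ofReal ((1 - α) * (n + 1 : ℝ)) := by
            rw [ENNReal.ofReal_mul (by linarith)]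
            congr 1
            rw [← ENNReal.ofReal_natCast (n + 1)]
            congr 1
            push_cast
            ring
        _ ≤ ENNReal.ofReal (k : ℝ) := ENNReal.ofReal_le_ofReal h1
        _ = (k : ℝ≥0∞) := ENNReal.ofReal_natCast k
    have hlast : ENNReal.ofReal (1 - α) ≤ P (B (Fin.last n)) := by
      rw [mul_comm] at hmul
      exact (ENNReal.mul_le_mul_iff_right
        (by exact_mod_cast Nat.succ_ne_zero n) (ENNReal.natCast_ne_top _)).mp hmul
    have hset : {ω | Y (Fin.last n) ω ∈
        {y : 𝒴 | (s (X (Fin.last n) ω) y : EReal) ≤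
          kthSmallest (fun i : Fin n => s (X i.castSucc ω) (Y i.castSucc ω)) k}}
        = B (Fin.last n) := by
      ext ω
      have hcond : 0 < k ∧ k ≤ n := ⟨hk0, hkn⟩
      simp only [Set.mem_setOf_eq, hBdef, hEdef, kthSmallest, dif_pos hcond,
        EReal.coe_le_coe_iff]
      rw [card_filter_castSucc
        (fun i : Fin (n + 1) => s (X i ω) (Y i ω) < s (X (Fin.last n) ω) (Y (Fin.last n) ω))
        (lt_irrefl _)]
      exact le_sort_iff (fun i : Fin n => s (X i.castSucc ω) (Y i.castSucc ω)) hk0 hkn _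
    rw [hset]
    exact hlast
  · -- trivial case : kthSmallest = ⊤
    have hset : {ω | Y (Fin.last n) ω ∈
        {y : 𝒴 | (s (X (Fin.last n) ω) y : EReal) ≤
          kthSmallest (fun i : Fin n => s (X i.castSucc ω) (Y i.castSucc ω)) k}}
        = Set.univ := by
      ext ω
      have hcond : ¬(0 < k ∧ k ≤ n) := by omega
      simp only [Set.mem_setOf_eq, Set.mem_univ, iff_true, kthSmallest, dif_neg hcond]
      exact le_top
    rw [hset, measure_univ]
    exact ENNReal.ofReal_le_one.2 (by linarith)
end

section
/- Let Z₁, …, Z_{n+1} be exchangeable real-valued random variables. Then for any k ∈ {1, …, n+1}, the probability that Z_{n+1} is among the k smallest values (i.e., that Z_{n+1} ≤ Z_{(k)}, the k-th order statistic of all n+1 values) is at least k/(n+1). -/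
open MeasureTheory Set
open scoped ENNReal

open Finset in
/-- Auxiliary: the number of coordinates strictly below the i-th one. -/
noncomputable def cnt {N : ℕ} (v : Fin N → ℝ) (i : Fin N) : ℕ :=
  (Finset.univ.filter fun j => v j < v i).card

open Finset in
lemma card_filter_perm_s8 {α : Type*} [Fintype α] [DecidableEq α] (σ : Equiv.Perm α)
    (p : α → Prop) [DecidablePred p] :
    (univ.filter fun a => p (σ a)).card = (univ.filter p).card := by
  apply Finset.card_bij' (fun a _ => σ a) (fun a _ => σ.symm a) <;> simp

lemma cnt_comp {N : ℕ} (v : Fin N → ℝ) (π : Equiv.Perm (Fin N)) (j : Fin N) :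
    cnt (fun l => v (π l)) j = cnt v (π j) := by
  unfold cnt; exact card_filter_perm_s8 π fun l => v l < v (π j)

lemma cnt_measurable {N : ℕ} (i : Fin N) : Measurable fun v : Fin N → ℝ => cnt v i := by
  have h : (fun v : Fin N → ℝ => cnt v i) = fun v => ∑ j, if v j < v i then 1 else 0 := by
    funext v; exact Finset.card_filter _ _
  rw [h]
  exact Finset.measurable_sum _ fun j _ =>
    Measurable.ite (measurableSet_lt (measurable_pi_apply j) (measurable_pi_apply i))
      measurable_const measurable_const

open Finset in
lemma filter_lt_card {N : ℕ} (a : Fin N) : (univ.filter fun m => m < a).card = (a : ℕ) := by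
  rw [show (univ.filter fun m => m < a) = Finset.Iio a by ext m; simp, Fin.card_Iio]

open Finset in
lemma filter_le_card {N : ℕ} (a : Fin N) : (univ.filter fun m => m ≤ a).card = (a : ℕ) + 1 := by
  rw [show (univ.filter fun m => m ≤ a) = Finset.Iic a by ext m; simp, Fin.card_Iic]

open Finset in
lemma rank_iff {N k : ℕ} (hk1 : 1 ≤ k) (hk2 : k ≤ N) (v : Fin N → ℝ) (i : Fin N) :
    ((v i : EReal) ≤ kthSmallest v k) ↔ cnt v i ≤ k - 1 := by
  have h : 0 < k ∧ k ≤ N := ⟨hk1, hk2⟩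
  rw [kthSmallest, dif_pos h, EReal.coe_le_coe_iff]
  set σ := Tuple.sort v with hσ
  set a : Fin N := ⟨k - 1, by omega⟩ with ha
  have hmono := Tuple.monotone_sort v
  have hcnt : cnt v i = (univ.filter fun m => v (σ m) < v i).card :=
    (card_filter_perm_s8 σ fun j => v j < v i).symm
  constructor
  · intro hle
    rw [hcnt]
    calc (univ.filter fun m => v (σ m) < v i).card
        ≤ (univ.filter fun m => m < a).card := by
          apply Finset.card_le_card
          intro m hm
          simp only [Finset.mem_filter, Finset.mem_univ, true_and] at hm ⊢
          by_contra hma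
          push_neg at hma
          exact absurd (lt_of_lt_of_le hm hle) (not_lt.2 (hmono hma))
      _ = k - 1 := filter_lt_card a
  · intro hle
    by_contra hlt
    push_neg at hlt
    have hsub : (univ.filter fun m => m ≤ a) ⊆ univ.filter fun m => v (σ m) < v i := by
      intro m hm
      simp only [Finset.mem_filter, Finset.mem_univ, true_and] at hm ⊢
      exact lt_of_le_of_lt (hmono hm) hlt
    have := Finset.card_le_card hsub
    rw [filter_le_card, ← hcnt] at this
    have hav : (a : ℕ) = k - 1 := rfl
    omega

open Finset in
lemma count_ge {N k : ℕ} (hk1 : 1 ≤ k) (hk2 : k ≤ N) (v : Fin N → ℝ) :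
    k ≤ (univ.filter fun i => cnt v i ≤ k - 1).card := by
  set σ := Tuple.sort v with hσ
  have hmono := Tuple.monotone_sort v
  set a : Fin N := ⟨k - 1, by omega⟩ with ha
  have hsub : (Finset.Iic a).map ⟨σ, σ.injective⟩ ⊆ univ.filter fun i => cnt v i ≤ k - 1 := by
    intro i hi
    simp only [Finset.mem_map, Finset.mem_Iic, Function.Embedding.coeFn_mk] at hi
    obtain ⟨m, hm, rfl⟩ := hi
    simp only [Finset.mem_filter, Finset.mem_univ, true_and]
    have hc : cnt v (σ m) = (univ.filter fun m' => v (σ m') < v (σ m)).card :=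
      (card_filter_perm_s8 σ fun j => v j < v (σ m)).symm
    rw [hc]
    calc (univ.filter fun m' => v (σ m') < v (σ m)).card
        ≤ (univ.filter fun m' => m' < m).card := by
          apply Finset.card_le_card
          intro m' hm'
          simp only [Finset.mem_filter, Finset.mem_univ, true_and] at hm' ⊢
          by_contra hge
          push_neg at hge
          exact absurd hm' (not_lt.2 (hmono hge))
      _ = (m : ℕ) := filter_lt_card m
      _ ≤ k - 1 := by have := Fin.le_iff_val_le_val.mp hm; simp [ha] at this; omega
  calc k = ((Finset.Iic a).map ⟨σ, σ.injective⟩).card := by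
        rw [Finset.card_map, Fin.card_Iic]; simp [ha]; omega
    _ ≤ _ := Finset.card_le_card hsub

/-- If Z₁,…,Z_{n+1} are exchangeable real random variables, then for any
k ∈ {1,…,n+1}, the probability that Z_{n+1} is at most the k-th order statistic
of all n+1 values is at least k/(n+1). -/
theorem exchangeable_rank_lower_bound
    {Ω : Type*} [MeasurableSpace Ω] (P : Measure Ω) [IsProbabilityMeasure P]
    (n : ℕ) (Z : Fin (n + 1) → Ω → ℝ) (hZ : ∀ i, Measurable (Z i))
    (hexch : ∀ π : Equiv.Perm (Fin (n + 1)),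
      P.map (fun ω i => Z (π i) ω) = P.map (fun ω i => Z i ω))
    (k : ℕ) (hk1 : 1 ≤ k) (hk2 : k ≤ n + 1) :
    ENNReal.ofReal ((k : ℝ) / (n + 1)) ≤
      P {ω | (Z (Fin.last n) ω : EReal) ≤ kthSmallest (fun i => Z i ω) k} := by
  classical
  have hvec : Measurable (fun ω => (fun i => Z i ω) : Ω → Fin (n + 1) → ℝ) :=
    measurable_pi_lambda _ hZ
  set μ : Measure (Fin (n + 1) → ℝ) := P.map (fun ω i => Z i ω) with hμdef
  have hprob : IsProbabilityMeasure μ := Measure.isProbabilityMeasure_map hvec.aemeasurable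
  set S : Fin (n + 1) → Set (Fin (n + 1) → ℝ) := fun i => {v | cnt v i ≤ k - 1} with hS
  have hSmeas : ∀ i, MeasurableSet (S i) := by
    intro i
    have : S i = (fun v => cnt v i) ⁻¹' (Set.Iic (k - 1)) := rfl
    rw [this]
    exact (cnt_measurable i) measurableSet_Iic
  -- all the events have the same probability
  have hsame : ∀ i, μ (S i) = μ (S (Fin.last n)) := by
    intro i
    set π := Equiv.swap (Fin.last n) i with hπ
    have hmeasπ : Measurable (fun ω => (fun l => Z (π l) ω) : Ω → Fin (n + 1) → ℝ) :=
      measurable_pi_lambda _ fun l => hZ (π l)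
    have hpre : (fun ω l => Z (π l) ω) ⁻¹' (S (Fin.last n)) = (fun ω l => Z l ω) ⁻¹' (S i) := by
      ext ω
      simp only [Set.mem_preimage, hS, Set.mem_setOf_eq]
      rw [cnt_comp (fun l => Z l ω) π (Fin.last n), hπ, Equiv.swap_apply_left]
    have h2 : μ (S i) = P ((fun ω l => Z l ω) ⁻¹' (S i)) :=
      Measure.map_apply hvec (hSmeas i)
    have h3 : μ (S (Fin.last n)) = P ((fun ω l => Z (π l) ω) ⁻¹' (S (Fin.last n))) := by
      rw [← hexch π]
      exact Measure.map_apply hmeasπ (hSmeas _)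
    rw [h2, h3, hpre]
  -- pointwise, at least k of the events hold
  have hpt : ∀ v : Fin (n + 1) → ℝ,
      (k : ℝ≥0∞) ≤ ∑ i, (S i).indicator (fun _ => (1 : ℝ≥0∞)) v := by
    intro v
    have hcg := count_ge hk1 hk2 v
    calc (k : ℝ≥0∞) ≤ ((Finset.univ.filter fun i => cnt v i ≤ k - 1).card : ℝ≥0∞) := by
          exact_mod_cast hcg
      _ = ∑ i, (S i).indicator (fun _ => (1 : ℝ≥0∞)) v := by
          rw [Finset.card_filter]
          push_cast
          apply Finset.sum_congr rfl
          intro i _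
          by_cases h : cnt v i ≤ k - 1 <;> simp [Set.indicator, hS, h]
  have h1 : (k : ℝ≥0∞) * μ Set.univ ≤ ∑ i, μ (S i) :=
    calc (k : ℝ≥0∞) * μ Set.univ = ∫⁻ _, (k : ℝ≥0∞) ∂μ := (lintegral_const _).symm
      _ ≤ ∫⁻ v, ∑ i, (S i).indicator (fun _ => (1 : ℝ≥0∞)) v ∂μ := lintegral_mono hpt
      _ = ∑ i, ∫⁻ v, (S i).indicator (fun _ => (1 : ℝ≥0∞)) v ∂μ :=
          lintegral_finset_sum _ fun i _ => measurable_const.indicator (hSmeas i)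
      _ = ∑ i, μ (S i) := by
          apply Finset.sum_congr rfl
          intro i _
          exact lintegral_indicator_one (hSmeas i)
  have hsum_eq : ∑ i : Fin (n + 1), μ (S i) = (n + 1 : ℝ≥0∞) * μ (S (Fin.last n)) := by
    rw [Finset.sum_congr rfl fun i _ => hsame i, Finset.sum_const, Finset.card_univ,
      Fintype.card_fin, nsmul_eq_mul]
    push_cast
    ring
  rw [hprob.measure_univ, mul_one, hsum_eq] at h1
  have hset : {ω | (Z (Fin.last n) ω : EReal) ≤ kthSmallest (fun i => Z i ω) k}
      = (fun ω (l : Fin (n + 1)) => Z l ω) ⁻¹' (S (Fin.last n)) := by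
    ext ω
    simp only [Set.mem_setOf_eq, Set.mem_preimage, hS]
    exact rank_iff hk1 hk2 (fun i => Z i ω) (Fin.last n)
  rw [hset, ← Measure.map_apply hvec (hSmeas _), ← hμdef]
  have hcast : ENNReal.ofReal ((k : ℝ) / (n + 1)) = (k : ℝ≥0∞) / ((n : ℝ≥0∞) + 1) := by
    rw [ENNReal.ofReal_div_of_pos (by positivity)]
    rw [ENNReal.ofReal_natCast, show ((n : ℝ) + 1) = ((n + 1 : ℕ) : ℝ) by push_cast; ring,
      ENNReal.ofReal_natCast]
    push_cast
    ring
  rw [hcast]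
  exact ENNReal.div_le_of_le_mul' h1
end

section
/- Let the calibrated interval be C(x) = [q_lo(x) − Q^{lo}, q_hi(x) + Q^{hi}], where Q^{lo} and Q^{hi} are the ⌈(1−α)(n+1)⌉-th smallest values of the calibration scores E_i^{lo} = q_lo(X_i) − Y_i and E_i^{hi} = Y_i − q_hi(X_i), respectively. If (X_i, Y_i), i = 1, …, n+1, are exchangeable, then P(Y_{n+1} ∈ C(X_{n+1})) ≥ 1 − 2α. -/
open Finset

lemma card_filter_val_lt {m k : ℕ} (hk : k ≤ m) :
    (univ.filter (fun p : Fin m => p.1 < k)).card = k := by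
  have : (univ.filter (fun p : Fin m => p.1 < k)) = Finset.map (Fin.castLEEmb hk) univ := by
    ext p
    simp only [Finset.mem_filter, Finset.mem_univ, true_and, Finset.mem_map, Fin.castLEEmb_apply]
    constructor
    · intro h; exact ⟨⟨p.1, h⟩, by ext; simp⟩
    · rintro ⟨q, rfl⟩; exact q.2
  rw [this, Finset.card_map, Finset.card_univ, Fintype.card_fin]

/-- If the p-th sorted value is < t, then at least p+1 entries are < t. -/
lemma rank_lt {n : ℕ} (v : Fin n → ℝ) (p : Fin n) (t : ℝ)
    (h : v (Tuple.sort v p) < t) :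
    p.1 + 1 ≤ (univ.filter (fun i => v i < t)).card := by
  have hmono := Tuple.monotone_sort v
  calc p.1 + 1 = (Finset.Iic p).card := (Fin.card_Iic p).symm
    _ = ((Finset.Iic p).image (Tuple.sort v)).card :=
        (Finset.card_image_of_injective _ (Tuple.sort v).injective).symm
    _ ≤ _ := by
        apply Finset.card_le_card
        intro i hi
        simp only [Finset.mem_image, Finset.mem_Iic] at hi
        obtain ⟨q, hq, rfl⟩ := hi
        simp only [Finset.mem_filter, Finset.mem_univ, true_and]
        exact lt_of_le_of_lt (hmono hq) h

/-- At most p entries are strictly below the p-th sorted value. -/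
lemma below_sorted_le {n : ℕ} (w : Fin n → ℝ) (p : Fin n) :
    (univ.filter (fun i => w i < w (Tuple.sort w p))).card ≤ p.1 := by
  have hmono := Tuple.monotone_sort w
  calc (univ.filter (fun i => w i < w (Tuple.sort w p))).card
      ≤ ((Finset.Iio p).image (Tuple.sort w)).card := by
        apply Finset.card_le_card
        intro i hi
        simp only [Finset.mem_filter, Finset.mem_univ, true_and] at hi
        simp only [Finset.mem_image, Finset.mem_Iio]
        refine ⟨(Tuple.sort w).symm i, ?_, by simp⟩
        by_contra hc
        push_neg at hc
        have := hmono hc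
        simp only [Function.comp] at this
        rw [Equiv.apply_symm_apply] at this
        exact absurd hi (not_lt.mpr this)
    _ = p.1 := by
        rw [Finset.card_image_of_injective _ (Tuple.sort w).injective, Fin.card_Iio]

/-- At most m - k indices have at least k entries strictly below them. -/
lemma count_high_rank {m k : ℕ} (hk : k ≤ m) (w : Fin m → ℝ) :
    (univ.filter (fun j => k ≤ (univ.filter (fun i => w i < w j)).card)).card ≤ m - k := by
  set T := univ.filter (fun j : Fin m => k ≤ (univ.filter (fun i => w i < w j)).card) with hT
  have hsub : (univ.filter (fun p : Fin m => p.1 < k)).image (Tuple.sort w) ⊆ univ \ T := by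
    intro j hj
    simp only [Finset.mem_image, Finset.mem_filter, Finset.mem_univ, true_and] at hj
    obtain ⟨p, hp, rfl⟩ := hj
    simp only [hT, Finset.mem_sdiff, Finset.mem_univ, Finset.mem_filter, true_and, not_le]
    exact lt_of_le_of_lt (below_sorted_le w p) hp
  have hcard : ((univ.filter (fun p : Fin m => p.1 < k)).image (Tuple.sort w)).card = k := by
    rw [Finset.card_image_of_injective _ (Tuple.sort w).injective, card_filter_val_lt hk]
  have h1 : k ≤ (univ \ T).card := by rw [← hcard]; exact Finset.card_le_card hsub
  have h2 : (univ \ T).card = m - T.card := by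
    rw [Finset.card_sdiff_of_subset (Finset.subset_univ T), Finset.card_univ, Fintype.card_fin]
  rw [h2] at h1
  have h3 : T.card ≤ m := by
    calc T.card ≤ (univ : Finset (Fin m)).card := Finset.card_le_univ T
      _ = m := by rw [Finset.card_univ, Fintype.card_fin]
  omega

open MeasureTheory
open scoped ENNReal

section OneSided
variable {Ω γ : Type*} [MeasurableSpace Ω] [MeasurableSpace γ]

/-- The "high rank" event for coordinate j. -/
def rankSet (s : γ → ℝ) (n k : ℕ) (j : Fin (n+1)) : Set (Fin (n+1) → γ) :=
  {v | k ≤ (univ.filter (fun i : Fin (n+1) => s (v i) < s (v j))).card}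

lemma measurable_rankSet (s : γ → ℝ) (hs : Measurable s) (n k : ℕ) (j : Fin (n+1)) :
    MeasurableSet (rankSet s n k j) := by
  have hN : Measurable (fun v : Fin (n+1) → γ =>
      (univ.filter (fun i : Fin (n+1) => s (v i) < s (v j))).card) := by
    simp only [Finset.card_filter]
    apply Finset.measurable_sum
    intro i _
    exact Measurable.ite
      (measurableSet_lt ((hs.comp (measurable_pi_apply i)))
        ((hs.comp (measurable_pi_apply j)))) measurable_const measurable_const
  exact hN (measurableSet_Ici (a := k))

lemma one_sided (P : Measure Ω) [IsProbabilityMeasure P] (n : ℕ)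
    (f : Ω → Fin (n+1) → γ) (hf : Measurable f)
    (hexch : ∀ π : Equiv.Perm (Fin (n+1)),
      P.map (fun ω i => f ω (π i)) = P.map f)
    (s : γ → ℝ) (hs : Measurable s) (k : ℕ) (hk : k ≤ n + 1) :
    (n + 1 : ℝ≥0∞) * P (f ⁻¹' rankSet s n k (Fin.last n)) ≤ (n + 1 - k : ℕ) := by
  have hmeas : ∀ j, MeasurableSet (rankSet s n k j) := measurable_rankSet s hs n k
  -- all events have the same probability
  have hsame : ∀ j : Fin (n+1), P (f ⁻¹' rankSet s n k j) = P (f ⁻¹' rankSet s n k (Fin.last n)) := by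
    intro j
    set π := Equiv.swap j (Fin.last n) with hπ
    have hmap := hexch π
    have hfg : Measurable (fun ω i => f ω (π i)) :=
      measurable_pi_lambda _ (fun i => (measurable_pi_apply (π i)).comp hf)
    have h1 : P ((fun ω i => f ω (π i)) ⁻¹' rankSet s n k (Fin.last n))
        = P (f ⁻¹' rankSet s n k (Fin.last n)) := by
      rw [← Measure.map_apply hfg (hmeas _), ← Measure.map_apply hf (hmeas _), hmap]
    rw [← h1]
    congr 1
    ext ω
    simp only [Set.mem_preimage, rankSet, Set.mem_setOf_eq]
    have hπlast : π (Fin.last n) = j := Equiv.swap_apply_right j (Fin.last n)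
    simp only [hπlast]
    constructor <;> intro h
    · calc k ≤ (univ.filter (fun i : Fin (n+1) => s (f ω i) < s (f ω j))).card := h
        _ = (univ.filter (fun i : Fin (n+1) => s (f ω (π i)) < s (f ω j))).card := by
          refine (Finset.card_bij (fun i _ => π i) ?_ ?_ ?_).symm
          · intro a ha
            simp only [Finset.mem_filter, Finset.mem_univ, true_and] at ha ⊢
            exact ha
          · intro a _ b _ hab; exact π.injective hab
          · intro b hb
            simp only [Finset.mem_filter, Finset.mem_univ, true_and] at hb ⊢
            exact ⟨π.symm b, by simpa using hb, by simp⟩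
    · calc k ≤ (univ.filter (fun i : Fin (n+1) => s (f ω (π i)) < s (f ω j))).card := h
        _ = (univ.filter (fun i : Fin (n+1) => s (f ω i) < s (f ω j))).card := by
          refine (Finset.card_bij (fun i _ => π i) ?_ ?_ ?_)
          · intro a ha
            simp only [Finset.mem_filter, Finset.mem_univ, true_and] at ha ⊢
            exact ha
          · intro a _ b _ hab; exact π.injective hab
          · intro b hb
            simp only [Finset.mem_filter, Finset.mem_univ, true_and] at hb ⊢
            exact ⟨π.symm b, by simpa using hb, by simp⟩
  -- sum bound
  have hsum : ∑ j : Fin (n+1), P (f ⁻¹' rankSet s n k j) ≤ (n + 1 - k : ℕ) := by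
    have hrw : ∀ j : Fin (n+1), P (f ⁻¹' rankSet s n k j)
        = ∫⁻ ω, (f ⁻¹' rankSet s n k j).indicator (fun _ => (1:ℝ≥0∞)) ω ∂P := by
      intro j
      exact (lintegral_indicator_one (hf (hmeas j))).symm
    calc ∑ j : Fin (n+1), P (f ⁻¹' rankSet s n k j)
        = ∫⁻ ω, ∑ j : Fin (n+1), (f ⁻¹' rankSet s n k j).indicator (fun _ => (1:ℝ≥0∞)) ω ∂P := by
          rw [lintegral_finset_sum]
          · exact Finset.sum_congr rfl (fun j _ => hrw j)
          · intro j _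
            exact (measurable_const.indicator (hf (hmeas j)))
      _ ≤ ∫⁻ _, ((n + 1 - k : ℕ) : ℝ≥0∞) ∂P := by
          apply lintegral_mono
          intro ω
          have hcount := count_high_rank (m := n+1) hk (fun i => s (f ω i))
          calc ∑ j : Fin (n+1), (f ⁻¹' rankSet s n k j).indicator (fun _ => (1:ℝ≥0∞)) ω
              = ∑ j ∈ univ.filter (fun j : Fin (n+1) =>
                  k ≤ (univ.filter (fun i => s (f ω i) < s (f ω j))).card), 1 := by
                rw [Finset.sum_filter]
                apply Finset.sum_congr rfl
                intro j _
                by_cases hj : ω ∈ f ⁻¹' rankSet s n k j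
                · rw [Set.indicator_of_mem hj]
                  simp only [Set.mem_preimage, rankSet, Set.mem_setOf_eq] at hj
                  rw [if_pos hj]
                · rw [Set.indicator_of_notMem hj]
                  simp only [Set.mem_preimage, rankSet, Set.mem_setOf_eq] at hj
                  rw [if_neg hj]
            _ = ((univ.filter (fun j : Fin (n+1) =>
                  k ≤ (univ.filter (fun i => s (f ω i) < s (f ω j))).card)).card : ℝ≥0∞) := by
                rw [Finset.sum_const, nsmul_eq_mul, mul_one]
            _ ≤ ((n + 1 - k : ℕ) : ℝ≥0∞) := by exact_mod_cast Nat.cast_le.mpr hcount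
      _ = ((n + 1 - k : ℕ) : ℝ≥0∞) := by simp
  calc (n + 1 : ℝ≥0∞) * P (f ⁻¹' rankSet s n k (Fin.last n))
      = ∑ j : Fin (n+1), P (f ⁻¹' rankSet s n k j) := by
        rw [Finset.sum_congr rfl (fun j _ => hsame j), Finset.sum_const, Finset.card_univ,
          Fintype.card_fin, nsmul_eq_mul]
        norm_num
    _ ≤ _ := hsum

end OneSided

open Set

lemma kthSmallest_eq {n k : ℕ} (v : Fin n → ℝ) (h1 : 0 < k) (h2 : k ≤ n) :
    kthSmallest v k = ((v (Tuple.sort v ⟨k - 1, by omega⟩)) : EReal) := by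
  rw [kthSmallest, dif_pos ⟨h1, h2⟩]

lemma kthSmallest_eq_top {n k : ℕ} (v : Fin n → ℝ) (h : ¬(0 < k ∧ k ≤ n)) :
    kthSmallest v k = ⊤ := by
  rw [kthSmallest, dif_neg h]

/-- Two-sided conformal calibration: with Q^{lo}, Q^{hi} the ⌈(1−α)(n+1)⌉-th smallest
values of the lower scores E_i^{lo} = q_lo(X_i) − Y_i and upper scores
E_i^{hi} = Y_i − q_hi(X_i) over the n calibration points, the calibrated interval
C(x) = [q_lo(x) − Q^{lo}, q_hi(x) + Q^{hi}] satisfies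
P(Y_{n+1} ∈ C(X_{n+1})) ≥ 1 − 2α whenever the pairs (X_i, Y_i) are exchangeable. -/
theorem two_sided_conformal_coverage
    {Ω 𝒳 : Type*} [MeasurableSpace Ω] [MeasurableSpace 𝒳]
    (P : Measure Ω) [IsProbabilityMeasure P]
    (n : ℕ) (X : Fin (n + 1) → Ω → 𝒳) (Y : Fin (n + 1) → Ω → ℝ)
    (hX : ∀ i, Measurable (X i)) (hY : ∀ i, Measurable (Y i))
    (qlo qhi : 𝒳 → ℝ) (hq : ∀ x, qlo x ≤ qhi x)
    (hqlo : Measurable qlo) (hqhi : Measurable qhi)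
    (α : ℝ) (hα : α ∈ Ioo (0 : ℝ) 1)
    (hexch : ∀ π : Equiv.Perm (Fin (n + 1)),
      P.map (fun ω i => (X (π i) ω, Y (π i) ω)) = P.map (fun ω i => (X i ω, Y i ω))) :
    ENNReal.ofReal (1 - 2 * α) ≤
      P {ω |
        (↑(qlo (X (Fin.last n) ω)) -
            kthSmallest (fun i : Fin n => qlo (X i.castSucc ω) - Y i.castSucc ω)
              ⌈(1 - α) * (n + 1 : ℝ)⌉₊
          ≤ (Y (Fin.last n) ω : EReal)) ∧
        ((Y (Fin.last n) ω : EReal) ≤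
          ↑(qhi (X (Fin.last n) ω)) +
            kthSmallest (fun i : Fin n => Y i.castSucc ω - qhi (X i.castSucc ω))
              ⌈(1 - α) * (n + 1 : ℝ)⌉₊)} := by
  obtain ⟨hα0, hα1⟩ := hα
  set k : ℕ := ⌈(1 - α) * (n + 1 : ℝ)⌉₊ with hkdef
  have hk1 : 0 < k := Nat.ceil_pos.mpr (mul_pos (by linarith) (by positivity))
  set G : Set Ω := {ω |
        (↑(qlo (X (Fin.last n) ω)) -
            kthSmallest (fun i : Fin n => qlo (X i.castSucc ω) - Y i.castSucc ω) k
          ≤ (Y (Fin.last n) ω : EReal)) ∧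
        ((Y (Fin.last n) ω : EReal) ≤
          ↑(qhi (X (Fin.last n) ω)) +
            kthSmallest (fun i : Fin n => Y i.castSucc ω - qhi (X i.castSucc ω)) k)} with hG
  by_cases hkn : k ≤ n
  swap
  · -- degenerate case: quantile is +∞, interval is everything
    have hGuniv : G = Set.univ := by
      ext ω
      simp only [hG, Set.mem_setOf_eq, Set.mem_univ, iff_true]
      rw [kthSmallest_eq_top _ (by omega), kthSmallest_eq_top _ (by omega)]
      constructor
      · have : (↑(qlo (X (Fin.last n) ω)) : EReal) - ⊤ = ⊥ := by simp
        rw [this]; exact bot_le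
      · have : (↑(qhi (X (Fin.last n) ω)) : EReal) + ⊤ = ⊤ := by simp
        rw [this]; exact le_top
    rw [hGuniv, measure_univ]
    exact ENNReal.ofReal_le_one.mpr (by linarith)
  -- main case
  have hkn1 : k ≤ n + 1 := by omega
  set f : Ω → Fin (n + 1) → 𝒳 × ℝ := fun ω i => (X i ω, Y i ω) with hfdef
  have hf : Measurable f :=
    measurable_pi_lambda _ (fun i => ((hX i).prodMk (hY i)))
  set slo : 𝒳 × ℝ → ℝ := fun p => qlo p.1 - p.2 with hslo
  set shi : 𝒳 × ℝ → ℝ := fun p => p.2 - qhi p.1 with hshi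
  have hslom : Measurable slo := (hqlo.comp measurable_fst).sub measurable_snd
  have hshim : Measurable shi := measurable_snd.sub (hqhi.comp measurable_fst)
  -- the one-sided bounds
  have key : ∀ s : 𝒳 × ℝ → ℝ, Measurable s →
      P (f ⁻¹' rankSet s n k (Fin.last n)) ≤ ENNReal.ofReal α := by
    intro s hs
    have h1 := one_sided P n f hf (fun π => hexch π) s hs k hkn1
    have hreal : ((n + 1 - k : ℕ) : ℝ) ≤ α * (n + 1) := by
      have hceil : (1 - α) * (n + 1 : ℝ) ≤ k := Nat.le_ceil _
      have : ((n + 1 - k : ℕ) : ℝ) = (n + 1 : ℝ) - k := by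
        rw [Nat.cast_sub hkn1]; push_cast; ring
      rw [this]; nlinarith
    have h2 : ((n + 1 - k : ℕ) : ℝ≥0∞) ≤ ENNReal.ofReal α * (n + 1 : ℝ≥0∞) := by
      calc ((n + 1 - k : ℕ) : ℝ≥0∞) = ENNReal.ofReal ((n + 1 - k : ℕ) : ℝ) := by
            rw [ENNReal.ofReal_natCast]
        _ ≤ ENNReal.ofReal (α * (n + 1)) := ENNReal.ofReal_le_ofReal hreal
        _ = ENNReal.ofReal α * ENNReal.ofReal ((n : ℝ) + 1) := by
            rw [ENNReal.ofReal_mul (le_of_lt hα0)]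
        _ = ENNReal.ofReal α * (n + 1 : ℝ≥0∞) := by
            congr 1
            rw [show ((n : ℝ) + 1) = ((n + 1 : ℕ) : ℝ) by push_cast; ring,
              ENNReal.ofReal_natCast]
            push_cast; ring
    have hN0 : (n + 1 : ℝ≥0∞) ≠ 0 := ne_of_gt (lt_of_lt_of_le zero_lt_one le_add_self)
    have hNtop : (n + 1 : ℝ≥0∞) ≠ ⊤ := by
      simp [ENNReal.add_ne_top]
    have := le_trans h1 h2
    rw [mul_comm (ENNReal.ofReal α)] at this
    exact (ENNReal.mul_le_mul_iff_right hN0 hNtop).mp this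
  -- failure events
  set Flo : Set Ω := {ω | ¬ (↑(qlo (X (Fin.last n) ω)) -
      kthSmallest (fun i : Fin n => qlo (X i.castSucc ω) - Y i.castSucc ω) k
        ≤ (Y (Fin.last n) ω : EReal))} with hFlo
  set Fhi : Set Ω := {ω | ¬ ((Y (Fin.last n) ω : EReal) ≤
      ↑(qhi (X (Fin.last n) ω)) +
        kthSmallest (fun i : Fin n => Y i.castSucc ω - qhi (X i.castSucc ω)) k)} with hFhi
  -- inclusion of failure events in rank events
  have hsubgen : ∀ (ω : Ω) (s : 𝒳 × ℝ → ℝ),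
      (fun i : Fin n => s (f ω i.castSucc)) (Tuple.sort (fun i : Fin n => s (f ω i.castSucc)) ⟨k-1, by omega⟩)
        < s (f ω (Fin.last n)) →
      ω ∈ f ⁻¹' rankSet s n k (Fin.last n) := by
    intro ω s hlt
    simp only [Set.mem_preimage, rankSet, Set.mem_setOf_eq]
    have h1 := rank_lt (fun i : Fin n => s (f ω i.castSucc)) ⟨k-1, by omega⟩
      (s (f ω (Fin.last n))) hlt
    simp only at h1
    have hk1' : k - 1 + 1 = k := by omega
    rw [hk1'] at h1
    refine le_trans h1 ?_
    apply Finset.card_le_card_of_injOn (fun i => i.castSucc)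
    · intro i hi
      simp only [Finset.mem_coe, Finset.mem_filter, Finset.mem_univ, true_and] at hi ⊢
      exact hi
    · intro a _ b _ hab
      exact Fin.castSucc_injective n hab
  have hFlosub : Flo ⊆ f ⁻¹' rankSet slo n k (Fin.last n) := by
    intro ω hω
    simp only [hFlo, Set.mem_setOf_eq] at hω
    rw [kthSmallest_eq _ hk1 hkn] at hω
    push_neg at hω
    apply hsubgen ω slo
    set q : ℝ := (fun i : Fin n => qlo (X i.castSucc ω) - Y i.castSucc ω)
      (Tuple.sort (fun i : Fin n => qlo (X i.castSucc ω) - Y i.castSucc ω) ⟨k-1, by omega⟩) with hq'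
    rw [show (↑(qlo (X (Fin.last n) ω)) - (q : EReal)) = ((qlo (X (Fin.last n) ω) - q : ℝ) : EReal)
      from (EReal.coe_sub _ _).symm] at hω
    rw [EReal.coe_lt_coe_iff] at hω
    show _ < slo (f ω (Fin.last n))
    simp only [hslo, hfdef]
    have : q < qlo (X (Fin.last n) ω) - Y (Fin.last n) ω := by linarith
    exact this
  have hFhisub : Fhi ⊆ f ⁻¹' rankSet shi n k (Fin.last n) := by
    intro ω hω
    simp only [hFhi, Set.mem_setOf_eq] at hω
    rw [kthSmallest_eq _ hk1 hkn] at hω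
    push_neg at hω
    apply hsubgen ω shi
    set q : ℝ := (fun i : Fin n => Y i.castSucc ω - qhi (X i.castSucc ω))
      (Tuple.sort (fun i : Fin n => Y i.castSucc ω - qhi (X i.castSucc ω)) ⟨k-1, by omega⟩) with hq'
    rw [show (↑(qhi (X (Fin.last n) ω)) + (q : EReal)) = ((qhi (X (Fin.last n) ω) + q : ℝ) : EReal)
      from (EReal.coe_add _ _).symm] at hω
    rw [EReal.coe_lt_coe_iff] at hω
    show _ < shi (f ω (Fin.last n))
    simp only [hshi, hfdef]
    have : q < Y (Fin.last n) ω - qhi (X (Fin.last n) ω) := by linarith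
    exact this
  have hPlo : P Flo ≤ ENNReal.ofReal α :=
    le_trans (measure_mono hFlosub) (key slo hslom)
  have hPhi : P Fhi ≤ ENNReal.ofReal α :=
    le_trans (measure_mono hFhisub) (key shi hshim)
  -- combine
  have hcover : (Set.univ : Set Ω) ⊆ G ∪ (Flo ∪ Fhi) := by
    intro ω _
    by_cases h1 : (↑(qlo (X (Fin.last n) ω)) -
        kthSmallest (fun i : Fin n => qlo (X i.castSucc ω) - Y i.castSucc ω) k
          ≤ (Y (Fin.last n) ω : EReal))
    · by_cases h2 : ((Y (Fin.last n) ω : EReal) ≤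
          ↑(qhi (X (Fin.last n) ω)) +
            kthSmallest (fun i : Fin n => Y i.castSucc ω - qhi (X i.castSucc ω)) k)
      · exact Or.inl ⟨h1, h2⟩
      · exact Or.inr (Or.inr h2)
    · exact Or.inr (Or.inl h1)
  have h1le : (1 : ℝ≥0∞) ≤ P G + ENNReal.ofReal (2 * α) := by
    calc (1 : ℝ≥0∞) = P Set.univ := (measure_univ (μ := P)).symm
      _ ≤ P (G ∪ (Flo ∪ Fhi)) := measure_mono hcover
      _ ≤ P G + P (Flo ∪ Fhi) := measure_union_le _ _
      _ ≤ P G + (P Flo + P Fhi) := by gcongr; exact measure_union_le _ _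
      _ ≤ P G + (ENNReal.ofReal α + ENNReal.ofReal α) := by gcongr
      _ = P G + ENNReal.ofReal (2 * α) := by
          rw [← ENNReal.ofReal_add (le_of_lt hα0) (le_of_lt hα0)]
          ring_nf
  by_cases h2α : 1 - 2 * α ≤ 0
  · calc ENNReal.ofReal (1 - 2 * α) = 0 := ENNReal.ofReal_eq_zero.mpr h2α
      _ ≤ P G := zero_le
  · push_neg at h2α
    have : ENNReal.ofReal (1 - 2 * α) = 1 - ENNReal.ofReal (2 * α) := by
      rw [ENNReal.ofReal_sub _ (by linarith), ENNReal.ofReal_one]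
    rw [this]
    exact tsub_le_iff_right.mpr h1le
end
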